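/- arXiv:2007.03751 — 3 statements merged into one kernel-verified Lean document; each statement's English description precedes it below -/
import Mathlib

section
/- Consider a symmetric network cost-sharing game on a finite graph G with source s, sink t, n players, and nondecreasing concave edge cost functions c_e with c_e(0) = 0. There exists an optimal assignment of players to s-t paths minimizing the total cost Σ_e c_e(ℓ_e) in which all n players use the same s-t path. -/
/-!
Concavity with `c 0 = 0` makes `c(ℓ) / ℓ` nonincreasing, so an edge with load `ℓ ≤ n` costs at
least `ℓ / n · c(n)`. Summing over edges, the cost of any assignment is at least the average, over
the players, of the cost of sending all `n` players along that player's path, hence at least the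
cost of sending all of them along the path minimizing `∑_{e ∈ p} c_e(n)`.
-/

/-- `p` is a directed path from `s` to `t` in the graph with edge relation `E`. -/
def IsSTPath {V : Type*} (E : V → V → Prop) (s t : V) (p : List V) : Prop :=
  p.Chain' E ∧ p.head? = some s ∧ p.getLast? = some t

/-- The load of edge `e` under the assignment `A` of paths to the `n` players. -/
def loadOn {V : Type*} [DecidableEq V] {n : ℕ} (A : Fin n → List V) (e : V × V) : ℕ :=
  (Finset.univ.filter fun i : Fin n => e ∈ (A i).zip (A i).tail).card

/-- The total cost of the assignment `A` with edge cost functions `c`. -/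
def totalCost {V : Type*} [Fintype V] [DecidableEq V] {n : ℕ}
    (c : V × V → ℕ → ℝ) (A : Fin n → List V) : ℝ :=
  ∑ e : V × V, c e (loadOn A e)

open Finset

theorem natCast_mul_le_mul_natCast_of_antitone_sub {α : Type*} [CommRing α] [LinearOrder α]
    [IsStrictOrderedRing α] {f : ℕ → α} (h0 : f 0 = 0)
    (hf : Antitone fun k => f (k + 1) - f k) {l n : ℕ} (hln : l ≤ n) :
    (l : α) * f n ≤ n * f l := by
  have htel (k : ℕ) : ∑ i ∈ range k, (f (i + 1) - f i) = f k := by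
    rw [sum_range_sub, h0, sub_zero]
  have hind : Antitone fun i : ℕ => if i < l then (1 : α) else 0 := fun i j hij => by
    dsimp only
    split_ifs <;> first | omega | simp
  -- Chebyshev's sum inequality for the indicator of `[0, l)` and the increments of `f`
  have := (hind.monovary hf).monovaryOn (range n) |>.sum_mul_sum_le_card_mul_sum
  simpa [ite_mul, sum_ite_mem, ← mem_range, range_inter_range, min_eq_left hln, htel,
    sum_boole, hln, card_range] using this

section Routing

variable {V : Type*} [Fintype V] [DecidableEq V] {n : ℕ}

def pathCost (w : V × V → ℝ) (p : List V) : ℝ :=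
  ∑ e : V × V, if e ∈ p.zip p.tail then w e else 0

omit [Fintype V] in
theorem loadOn_le (B : Fin n → List V) (e : V × V) : loadOn B e ≤ n :=
  (card_filter_le _ _).trans_eq (card_fin n)

omit [Fintype V] in
theorem loadOn_const (p : List V) (e : V × V) :
    loadOn (fun _ : Fin n => p) e = if e ∈ p.zip p.tail then n else 0 := by
  unfold loadOn
  split_ifs with he <;> simp [he]

theorem totalCost_const {c : V × V → ℕ → ℝ} (hzero : ∀ e, c e 0 = 0) (p : List V) :
    totalCost c (fun _ : Fin n => p) = pathCost (fun e => c e n) p := by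
  unfold totalCost pathCost
  refine sum_congr rfl fun e _ => ?_
  rw [loadOn_const]
  split_ifs <;> simp [hzero]

theorem sum_pathCost_eq_sum_loadOn_mul (w : V × V → ℝ) (B : Fin n → List V) :
    ∑ i, pathCost w (B i) = ∑ e : V × V, (loadOn B e : ℝ) * w e := by
  unfold pathCost loadOn
  rw [sum_comm]
  refine sum_congr rfl fun e _ => ?_
  rw [← sum_filter, sum_const, nsmul_eq_mul]

end Routing

theorem concave_single_path_optimum_general
    {V : Type*} [Fintype V] [DecidableEq V] (E : V → V → Prop)
    (s t : V) (c : V × V → ℕ → ℝ)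
    (hzero : ∀ e, c e 0 = 0)
    (hconc : ∀ e, ∀ n : ℕ, 1 ≤ n → c e (n + 1) - c e n ≤ c e n - c e (n - 1))
    (n : ℕ)
    (hpath : ∃ p : List V, p.Nodup ∧ IsSTPath E s t p) :
    ∃ A : Fin n → List V,
      (∀ i, (A i).Nodup ∧ IsSTPath E s t (A i)) ∧
      (∀ i j, A i = A j) ∧
      (∀ B : Fin n → List V, (∀ i, (B i).Nodup ∧ IsSTPath E s t (B i)) →
        totalCost c A ≤ totalCost c B) := by
  obtain ⟨p, hp, hmin⟩ := Set.exists_min_image {p : List V | p.Nodup ∧ IsSTPath E s t p}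
    (pathCost fun e => c e n)
    ((List.finite_length_le V (Fintype.card V)).subset fun _ hp => hp.1.length_le_card) hpath
  refine ⟨fun _ => p, fun _ => hp, fun _ _ => rfl, fun B hB => ?_⟩
  rcases n.eq_zero_or_pos with rfl | hn
  · rw [Subsingleton.elim B fun _ => p]
  have hincr (e : V × V) : Antitone fun k => c e (k + 1) - c e k :=
    antitone_nat_of_succ_le fun k => by simpa using hconc e (k + 1) le_add_self
  refine le_of_mul_le_mul_left ?_ (Nat.cast_pos.mpr hn : (0 : ℝ) < n)
  calc (n : ℝ) * totalCost c (fun _ => p)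
      = ∑ _i : Fin n, pathCost (fun e => c e n) p := by simp [totalCost_const hzero]
    _ ≤ ∑ i, pathCost (fun e => c e n) (B i) := sum_le_sum fun i _ => hmin _ (hB i)
    _ = ∑ e, (loadOn B e : ℝ) * c e n := sum_pathCost_eq_sum_loadOn_mul _ B
    _ ≤ ∑ e, (n : ℝ) * c e (loadOn B e) := sum_le_sum fun e _ =>
      natCast_mul_le_mul_natCast_of_antitone_sub (hzero e) (hincr e) (loadOn_le B e)
    _ = n * totalCost c B := (mul_sum _ _ _).symm

/-- In a symmetric network cost-sharing game with nondecreasing concave edge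
costs, there is an optimal assignment that routes all players on a single
`s`-`t` path. -/
theorem concave_single_path_optimum
    {V : Type*} [Fintype V] [DecidableEq V] (E : V → V → Prop)
    (s t : V) (c : V × V → ℕ → ℝ)
    (hnonneg : ∀ e n, 0 ≤ c e n) (hzero : ∀ e, c e 0 = 0)
    (hmono : ∀ e, Monotone (c e))
    (hconc : ∀ e, ∀ n : ℕ, 1 ≤ n → c e (n + 1) - c e n ≤ c e n - c e (n - 1))
    (n : ℕ) (hn : 0 < n)
    (hpath : ∃ p : List V, p.Nodup ∧ IsSTPath E s t p) :
    ∃ A : Fin n → List V,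
      (∀ i, (A i).Nodup ∧ IsSTPath E s t (A i)) ∧
      (∀ i j, A i = A j) ∧
      (∀ B : Fin n → List V, (∀ i, (B i).Nodup ∧ IsSTPath E s t (B i)) →
        totalCost c A ≤ totalCost c B) :=
  concave_single_path_optimum_general E s t c hzero hconc n hpath
end

section
/- Let c_1,...,c_k : ℕ → ℝ be functions. Given r ∈ ℕ and an upper bound N on loads, define ĉ_i(ℓ) = ⌈c_i(ℓ)·10^r⌉·10^{−r} + N!·10^{−(r+N!·i)}. Then for any two distinct nonempty subsets S ≠ T of {1,...,k} and any load assignments ℓ, ℓ' with values in {1,...,N}, we have Σ_{i∈S} ĉ_i(ℓ_i) ≠ Σ_{i∈T} ĉ'_i(ℓ'_i) whenever the index sets S, T differ, and the total increase of each ĉ_i over c_i is at most 10^{−r} + N!·10^{−(r+N!)}. -/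
/-!
With `m = N!` and `B = 10 ^ m`, multiplying a perturbed sum over `S` by `10 ^ r * B ^ k` gives
an integer of the form `P * B ^ k + m * ∑ i ∈ S, B ^ (k - 1 - i)`. Since `m < B`, the second
summand is a base-`B` numeral with digit `m` exactly at the positions of `S`; it lies in
`[0, B ^ k)`, so it is the residue of the whole sum modulo `B ^ k` and determines `S`.
The cost bound holds because rounding up adds less than `10⁻ʳ` and the perturbation is
largest for the first index.
-/

open Finset

lemma Nat.mul_geomSum_lt {b d n : ℕ} {s : Finset ℕ} (hdb : d < b) (hs : ∀ j ∈ s, j < n) :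
    d * ∑ j ∈ s, b ^ j < b ^ n :=
  calc d * ∑ j ∈ s, b ^ j
      ≤ (b - 1) * ∑ j ∈ range n, b ^ j :=
        Nat.mul_le_mul (by omega) (sum_le_sum_of_subset fun j hj ↦ mem_range.2 (hs j hj))
    _ = b ^ n - 1 := by rw [mul_comm, geom_sum_mul_of_one_le (by omega)]
    _ < b ^ n := Nat.sub_lt (Nat.pow_pos (by omega)) one_pos

lemma Int.eq_of_mul_add_eq_mul_add {p q x y M : ℤ} (hx₀ : 0 ≤ x) (hx : x < M)
    (hy₀ : 0 ≤ y) (hy : y < M) (h : p * M + x = q * M + y) : x = y := by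
  have h' := congrArg (· % M) h
  simpa only [add_comm (_ * M), Int.add_mul_emod_self_right, Int.emod_eq_of_lt hx₀ hx,
    Int.emod_eq_of_lt hy₀ hy] using h'

namespace Fin

def revValEmbedding (k : ℕ) : Fin k ↪ ℕ :=
  revPerm.toEmbedding.trans valEmbedding

variable {k b d : ℕ}

lemma sum_pow_rev_eq_sum_map (S : Finset (Fin k)) :
    ∑ i ∈ S, b ^ (i.rev : ℕ) = ∑ j ∈ S.map (revValEmbedding k), b ^ j := by
  rw [sum_map]
  rfl

lemma sum_pow_rev_injective (hb : 2 ≤ b) :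
    Function.Injective fun S : Finset (Fin k) ↦ ∑ i ∈ S, b ^ (i.rev : ℕ) := by
  intro S T h
  apply map_injective (revValEmbedding k)
  apply geomSum_injective hb
  simpa only [sum_pow_rev_eq_sum_map] using h

lemma mul_sum_pow_rev_lt (hdb : d < b) (S : Finset (Fin k)) :
    d * ∑ i ∈ S, b ^ (i.rev : ℕ) < b ^ k := by
  rw [sum_pow_rev_eq_sum_map]
  refine Nat.mul_geomSum_lt hdb fun j hj ↦ ?_
  obtain ⟨i, -, rfl⟩ := mem_map.1 hj
  exact i.rev.isLt

theorem eq_of_sum_mul_pow_add_mul_pow_rev_eq (hd : 0 < d) (hdb : d < b)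
    {S T : Finset (Fin k)} (a a' : Fin k → ℤ)
    (h : ∑ i ∈ S, (a i * b ^ k + d * b ^ (i.rev : ℕ)) =
      ∑ i ∈ T, (a' i * b ^ k + d * b ^ (i.rev : ℕ))) : S = T := by
  simp only [sum_add_distrib, ← sum_mul, ← mul_sum] at h
  have hdigits := Int.eq_of_mul_add_eq_mul_add (by positivity)
    (by exact_mod_cast mul_sum_pow_rev_lt hdb S) (by positivity)
    (by exact_mod_cast mul_sum_pow_rev_lt hdb T) h
  exact sum_pow_rev_injective (show 2 ≤ b by omega)
    (by exact_mod_cast Int.eq_of_mul_eq_mul_left (by positivity) hdigits)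

end Fin

lemma div_add_div_mul_pow_succ_mul_eq {K : Type*} [Field K] {k : ℕ} (i : Fin k) {q B : K}
    (hq : q ≠ 0) (hB : B ≠ 0) (a d : K) :
    (a / q + d / (q * B ^ ((i : ℕ) + 1))) * (q * B ^ k) = a * B ^ k + d * B ^ (i.rev : ℕ) := by
  have hk : B ^ k = B ^ ((i : ℕ) + 1) * B ^ (i.rev : ℕ) := by
    rw [← pow_add, Fin.val_rev]
    congr
    omega
  rw [hk]
  field_simp

theorem tie_breaking_perturbation_general
    (k r N : ℕ) (c : Fin k → ℕ → ℝ) :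
    let chat : Fin k → ℕ → ℝ := fun i ℓ =>
      (⌈c i ℓ * 10 ^ r⌉ : ℝ) / 10 ^ r +
        (N.factorial : ℝ) / 10 ^ (r + N.factorial * ((i : ℕ) + 1))
    (∀ (S T : Finset (Fin k)), S.Nonempty → T.Nonempty → S ≠ T →
      ∀ ℓ ℓ' : Fin k → ℕ,
        (∀ i, 1 ≤ ℓ i ∧ ℓ i ≤ N) → (∀ i, 1 ≤ ℓ' i ∧ ℓ' i ≤ N) →
        ∑ i ∈ S, chat i (ℓ i) ≠ ∑ i ∈ T, chat i (ℓ' i)) ∧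
    (∀ (i : Fin k) (ℓ : ℕ), 1 ≤ ℓ → ℓ ≤ N →
      chat i ℓ - c i ℓ ≤ 1 / 10 ^ r + (N.factorial : ℝ) / 10 ^ (r + N.factorial)) := by
  set m := N.factorial
  intro chat
  have hscaled (i : Fin k) (x : ℕ) : chat i x * (10 ^ r * (10 ^ m) ^ k) =
      ((⌈c i x * 10 ^ r⌉ * (10 ^ m) ^ k + m * (10 ^ m) ^ (i.rev : ℕ) : ℤ) : ℝ) := by
    have hpow : (10 : ℝ) ^ (r + m * ((i : ℕ) + 1)) = 10 ^ r * (10 ^ m) ^ ((i : ℕ) + 1) := by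
      rw [pow_add, pow_mul]
    push_cast
    simp only [chat, hpow]
    exact div_add_div_mul_pow_succ_mul_eq i (by positivity) (by positivity) _ _
  refine ⟨fun S T _ _ hST ℓ ℓ' _ _ heq ↦ hST ?_, fun i ℓ _ _ ↦ ?_⟩
  · refine Fin.eq_of_sum_mul_pow_add_mul_pow_rev_eq (b := 10 ^ m) N.factorial_pos
      (Nat.lt_pow_self (by norm_num))
      (fun i ↦ ⌈c i (ℓ i) * 10 ^ r⌉) (fun i ↦ ⌈c i (ℓ' i) * 10 ^ r⌉) ?_
    have := congrArg (· * (10 ^ r * (10 ^ m) ^ k : ℝ)) heq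
    simp only [sum_mul, hscaled] at this
    exact_mod_cast this
  · have hceil : (⌈c i ℓ * 10 ^ r⌉ : ℝ) / 10 ^ r ≤ c i ℓ + 1 / 10 ^ r := by
      rw [div_le_iff₀ (by positivity), add_mul, one_div_mul_cancel (by positivity)]
      exact (Int.ceil_lt_add_one _).le
    have hperturbation : (m : ℝ) / 10 ^ (r + m * ((i : ℕ) + 1)) ≤ m / 10 ^ (r + m) := by
      gcongr
      · norm_num
      · exact Nat.le_mul_of_pos_right m (Nat.succ_pos _)
    simp only [chat]
    linarith

/-- Tie-breaking perturbation: rounding each cost up to `r` decimal places and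
adding `N! * 10 ^ (-(r + N! * i))` to the `i`-th cost function guarantees that
sums of perturbed costs over two different index sets are never equal, while
each cost increases by at most `10⁻ʳ + N! * 10^{-(r+N!)}`. -/
theorem tie_breaking_perturbation
    (k r N : ℕ) (hN : 0 < N) (c : Fin k → ℕ → ℝ)
    (hc : ∀ i ℓ, 0 ≤ c i ℓ) :
    let chat : Fin k → ℕ → ℝ := fun i ℓ =>
      (⌈c i ℓ * 10 ^ r⌉ : ℝ) / 10 ^ r +
        (N.factorial : ℝ) / 10 ^ (r + N.factorial * ((i : ℕ) + 1))
    (∀ (S T : Finset (Fin k)), S.Nonempty → T.Nonempty → S ≠ T →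
      ∀ ℓ ℓ' : Fin k → ℕ,
        (∀ i, 1 ≤ ℓ i ∧ ℓ i ≤ N) → (∀ i, 1 ≤ ℓ' i ∧ ℓ' i ≤ N) →
        ∑ i ∈ S, chat i (ℓ i) ≠ ∑ i ∈ T, chat i (ℓ' i)) ∧
    (∀ (i : Fin k) (ℓ : ℕ), 1 ≤ ℓ → ℓ ≤ N →
      chat i ℓ - c i ℓ ≤ 1 / 10 ^ r + (N.factorial : ℝ) / 10 ^ (r + N.factorial)) :=
  tie_breaking_perturbation_general k r N c
end

section
/- Let s be a Nash equilibrium under the incremental cost-sharing protocol with convex edge costs, and let s* be an optimal assignment such that for every player i and every edge e ∈ s*_i, ℓ_e^{<i}(s) ≤ ℓ_e^{<i}(s*). Then the equilibrium total cost satisfies C(s) ≤ C(s*); i.e., s is optimal. -/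
/-- Load of edge `e` under profile `s`. -/
def netLoad {E : Type*} [DecidableEq E] {n : ℕ} (s : Fin n → Finset E) (e : E) : ℕ :=
  (Finset.univ.filter fun i : Fin n => e ∈ s i).card

/-- Load of edge `e` under profile `s` due to players preceding `i`. -/
def priorLoad {E : Type*} [DecidableEq E] {n : ℕ}
    (s : Fin n → Finset E) (i : Fin n) (e : E) : ℕ :=
  (Finset.univ.filter fun k : Fin n => k < i ∧ e ∈ s k).card

/-- Cost share of player `i` under the incremental cost-sharing protocol. -/
def incShare {E : Type*} [DecidableEq E] {n : ℕ}
    (c : E → ℕ → ℝ) (s : Fin n → Finset E) (i : Fin n) : ℝ :=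
  ∑ e ∈ s i, (c e (priorLoad s i e + 1) - c e (priorLoad s i e))

/-- Total cost of profile `s`. -/
def netCost {E : Type*} [Fintype E] [DecidableEq E] {n : ℕ}
    (c : E → ℕ → ℝ) (s : Fin n → Finset E) : ℝ :=
  ∑ e : E, c e (netLoad s e)

/-!
Summed in player order, the incremental shares on an edge telescope to its cost, so the cost of
any profile is the sum of its players' shares. At equilibrium a player's share is at most what
she would pay by switching to her path in `s*`; on that path the players before her load each
edge no more than in `s*`, so by convexity this deviation costs at most her share in `s*`.
-/

open Finset

theorem Finset.sum_sub_card_filter_lt {α M : Type*} [LinearOrder α] [AddCommGroup M]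
    (T : Finset α) (f : ℕ → M) :
    ∑ i ∈ T, (f (#{j ∈ T | j < i} + 1) - f #{j ∈ T | j < i}) = f #T - f 0 := by
  induction T using Finset.induction_on_max with
  | empty => simp
  | insert a T ha ih =>
    have hnotin : a ∉ T := fun h => (ha a h).false
    have hrank_a : #{j ∈ insert a T | j < a} = #T := by
      rw [filter_insert, if_neg (lt_irrefl a), filter_true_of_mem ha]
    have hrank : ∀ x ∈ T, {j ∈ insert a T | j < x} = {j ∈ T | j < x} := fun x hx => by
      rw [filter_insert, if_neg (ha x hx).not_gt]
    rw [sum_insert hnotin, hrank_a, sum_congr rfl fun x hx => by rw [hrank x hx], ih,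
      card_insert_of_notMem hnotin]
    abel

section IncrementalSharing

variable {E : Type*} [DecidableEq E] {n : ℕ}

theorem priorLoad_eq_card_filter (s : Fin n → Finset E) (i : Fin n) (e : E) :
    priorLoad s i e = #{k ∈ {k | e ∈ s k} | k < i} := by
  rw [priorLoad, filter_filter]
  simp only [and_comm]

theorem netCost_eq_sum_incShare [Fintype E] (c : E → ℕ → ℝ) (hzero : ∀ e, c e 0 = 0)
    (s : Fin n → Finset E) :
    netCost c s = ∑ i, incShare c s i := by
  have hswap : ∑ i, incShare c s i =
      ∑ e, ∑ i ∈ {i | e ∈ s i}, (c e (priorLoad s i e + 1) - c e (priorLoad s i e)) :=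
    sum_comm' (fun i e => by simp)
  simp only [hswap, netCost, netLoad, priorLoad_eq_card_filter, sum_sub_card_filter_lt, hzero,
    sub_zero]

theorem priorLoad_update_self (s : Fin n → Finset E) (i : Fin n) (p : Finset E) (e : E) :
    priorLoad (Function.update s i p) i e = priorLoad s i e := by
  unfold priorLoad
  congr 1
  refine filter_congr fun k _ => and_congr_right fun hk => ?_
  rw [Function.update_of_ne hk.ne]

theorem incShare_le_of_priorLoad_le (c : E → ℕ → ℝ)
    (hconv : ∀ e, Monotone fun ℓ => c e (ℓ + 1) - c e ℓ) {s t : Fin n → Finset E} {i : Fin n}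
    (hst : s i = t i) (hload : ∀ e ∈ t i, priorLoad s i e ≤ priorLoad t i e) :
    incShare c s i ≤ incShare c t i := by
  rw [incShare, incShare, hst]
  exact sum_le_sum fun e he => hconv e (hload e he)

end IncrementalSharing

theorem incremental_nash_is_optimal_general
    {E : Type*} [Fintype E] [DecidableEq E] (n : ℕ)
    (c : E → ℕ → ℝ)
    (hzero : ∀ e, c e 0 = 0)
    (hconv : ∀ e, Monotone fun ℓ => c e (ℓ + 1) - c e ℓ)
    (Strat : Fin n → Set (Finset E))
    (s sstar : Fin n → Finset E)
    (hsstar : ∀ i, sstar i ∈ Strat i)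
    (hNash : ∀ i : Fin n, ∀ p ∈ Strat i,
      incShare c s i ≤ incShare c (Function.update s i p) i)
    (hdom : ∀ i : Fin n, ∀ e ∈ sstar i, priorLoad s i e ≤ priorLoad sstar i e) :
    netCost c s ≤ netCost c sstar := by
  rw [netCost_eq_sum_incShare c hzero s, netCost_eq_sum_incShare c hzero sstar]
  refine sum_le_sum fun i _ => ?_
  calc incShare c s i ≤ incShare c (Function.update s i (sstar i)) i := hNash i _ (hsstar i)
    _ ≤ incShare c sstar i :=
      incShare_le_of_priorLoad_le c hconv (Function.update_self ..) fun e he => by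
        simpa only [priorLoad_update_self] using hdom i e he

/-- Under the incremental cost-sharing protocol with convex edge costs, any
Nash equilibrium `s` admitting an optimal profile `s*` with dominated prior
loads has cost at most the optimal cost, i.e. `s` is optimal. -/
theorem incremental_nash_is_optimal
    {E : Type*} [Fintype E] [DecidableEq E] (n : ℕ)
    (c : E → ℕ → ℝ)
    (hnonneg : ∀ e ℓ, 0 ≤ c e ℓ) (hzero : ∀ e, c e 0 = 0)
    (hmono : ∀ e, Monotone (c e))
    (hconv : ∀ e, Monotone fun ℓ => c e (ℓ + 1) - c e ℓ)
    (Strat : Fin n → Set (Finset E))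
    (s sstar : Fin n → Finset E)
    (hs : ∀ i, s i ∈ Strat i) (hsstar : ∀ i, sstar i ∈ Strat i)
    (hNash : ∀ i : Fin n, ∀ p ∈ Strat i,
      incShare c s i ≤ incShare c (Function.update s i p) i)
    (hdom : ∀ i : Fin n, ∀ e ∈ sstar i, priorLoad s i e ≤ priorLoad sstar i e) :
    netCost c s ≤ netCost c sstar :=
  incremental_nash_is_optimal_general n c hzero hconv Strat s sstar hsstar hNash hdom
end
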